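/- Suppose (H1)–(H3) hold, (H4) holds with μ > 0 and μ < M := max{2L₀, 4L}, and g has a global minimizer y*. Let {y_k} be generated by Algorithm A. Then for every integer T with T ≥ [log₂(1 + μ/(M − μ))]^{-1}, ‖∇g(y_T)‖ ≤ [2q·M^{q−1}·N^q·μ·β_d(y₀, y*)/σ_q]^{1/q}·(1 + μ/(M − μ))^{−T/q}. -/

import Mathlib

/-!
Write `c_k = 2^{i_k} L_k` for the accepted coefficient. Backtracking never rejects a coefficient
`≥ L`, so `c_k ≤ max L₀ (2L) ≤ M`. Optimality of the step gives
`∇g(y_k) = c_k (∇d(y_k) - ∇d(y_{k+1}))`, hence the three-point inequality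
`g(y_{k+1}) ≤ g(x) + (c_k - μ) β(y_k, x) - c_k β(y_{k+1}, x)`. At `x = y*` it shrinks
`M β(y_k, y*)` by the factor `1 - μ/M` while paying for the gap `g(y_{k+1}) - g(y*)`; weighting by
`r^k`, `r = 1 + μ/(M - μ)`, and telescoping bounds the gap at time `T` by `2 μ β(y₀, y*) r^{-T}`
once `r^T ≥ 2`. The Hessian bound `N` and uniform convexity of degree `q` turn this gap into the
bound on `‖∇g(y_T)‖ = c_T ‖∇d(y_T) - ∇d(y_{T+1})‖`.
-/

open scoped InnerProductSpace

/-- The Bregman distance `β_d(u, v) = d(v) − d(u) − ⟨∇d(u), v − u⟩`. -/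
noncomputable def breg {E : Type*} [NormedAddCommGroup E] [InnerProductSpace ℝ E]
    [CompleteSpace E] (d : E → ℝ) (u v : E) : ℝ :=
  d v - d u - ⟪gradient d u, v - u⟫_ℝ

/-- One successful step of the adaptive Bregman proximal gradient method with coefficient `M`:
`w` is a global minimizer of `z ↦ ⟨∇g(yk), z − yk⟩ + M·β_d(yk, z)` and satisfies the
sufficient-decrease acceptance test. -/
noncomputable def stepOK {E : Type*} [NormedAddCommGroup E] [InnerProductSpace ℝ E]
    [CompleteSpace E] (g d : E → ℝ) (M : ℝ) (yk w : E) : Prop :=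
  (∀ z : E, ⟪gradient g yk, w - yk⟫_ℝ + M * breg d yk w
      ≤ ⟪gradient g yk, z - yk⟫_ℝ + M * breg d yk z) ∧
  g w ≤ g yk + ⟪gradient g yk, w - yk⟫_ℝ + M * breg d yk w

/-- Algorithm A (adaptive Bregman proximal gradient method): `L 0 = L₀` and, for each `k`,
`i k` is the smallest integer `≥ 0` such that the regularized step with coefficient
`2^{i k}·L k` exists and is accepted, `y (k+1)` is that step, and `L (k+1) = 2^{i k − 1}·L k`. -/
noncomputable def algA {E : Type*} [NormedAddCommGroup E] [InnerProductSpace ℝ E]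
    [CompleteSpace E] (g d : E → ℝ) (L0 : ℝ) (y : ℕ → E) (L : ℕ → ℝ) (i : ℕ → ℕ) : Prop :=
  L 0 = L0 ∧ ∀ k : ℕ,
    stepOK g d ((2 : ℝ) ^ i k * L k) (y k) (y (k + 1)) ∧
    (∀ j : ℕ, j < i k → ¬ ∃ w : E, stepOK g d ((2 : ℝ) ^ j * L k) (y k) w) ∧
    L (k + 1) = (2 : ℝ) ^ i k * L k / 2

open Filter

lemma tendsto_mul_rpow_sub_mul_atTop {A b q : ℝ} (hA : 0 < A) (hq : 2 ≤ q) :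
    Tendsto (fun r : ℝ => A * r ^ q - b * r) atTop atTop := by
  have hquad : Tendsto (fun r : ℝ => r * (A * r - b)) atTop atTop :=
    tendsto_id.atTop_mul_atTop₀ (tendsto_atTop_add_const_right _ _ (tendsto_id.const_mul_atTop hA))
  refine tendsto_atTop_mono' _ ?_ hquad
  filter_upwards [eventually_ge_atTop 1] with r hr
  have : r ^ (2 : ℕ) ≤ r ^ q := by
    rw [← Real.rpow_natCast]; exact Real.rpow_le_rpow_of_exponent_le hr (by norm_num [hq])
  nlinarith

section Bregman

variable {E : Type*} [NormedAddCommGroup E] [InnerProductSpace ℝ E] [CompleteSpace E]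

def RelativelySmooth (g d : E → ℝ) (L : ℝ) : Prop :=
  ∀ x y : E, g x ≤ g y + ⟪gradient g y, x - y⟫_ℝ + L * breg d y x

def RelativelyStronglyConvex (g d : E → ℝ) (μ : ℝ) : Prop :=
  ∀ x y : E, g y + ⟪gradient g y, x - y⟫_ℝ + μ * breg d y x ≤ g x

def BregUniformlyConvex (d : E → ℝ) (q σ : ℝ) : Prop :=
  ∀ x y : E, σ / q * ‖x - y‖ ^ q ≤ breg d y x

@[simp]
lemma breg_self (d : E → ℝ) (u : E) : breg d u u = 0 := by simp [breg]

lemma breg_three_point (d : E → ℝ) (u w x : E) :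
    breg d u x - breg d u w - breg d w x = ⟪gradient d w - gradient d u, x - w⟫_ℝ := by
  simp only [breg, inner_sub_left, inner_sub_right]
  ring

lemma BregUniformlyConvex.breg_nonneg {d : E → ℝ} {q σ : ℝ} (h : BregUniformlyConvex d q σ)
    (hq : 0 ≤ q) (hσ : 0 ≤ σ) (u v : E) : 0 ≤ breg d u v :=
  (h v u).trans' (by positivity)

lemma norm_gradient_sub_le {d : E → ℝ} (hd : ContDiff ℝ 2 d) {s : Set E} (hs : Convex ℝ s)
    {N : ℝ} (hN : ∀ z ∈ s, ‖iteratedFDeriv ℝ 2 d z‖ ≤ N) {x z : E} (hx : x ∈ s) (hz : z ∈ s) :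
    ‖gradient d x - gradient d z‖ ≤ N * ‖x - z‖ := by
  have hdiff : Differentiable ℝ (fderiv ℝ d) :=
    (hd.fderiv_right (m := 1) le_rfl).differentiable one_ne_zero
  have hbound : ∀ u ∈ s, ‖fderiv ℝ (fderiv ℝ d) u‖ ≤ N := fun u hu => by
    rw [← norm_iteratedFDeriv_one, norm_iteratedFDeriv_fderiv]
    exact hN u hu
  rw [gradient, gradient, ← map_sub, LinearIsometryEquiv.norm_map]
  exact hs.norm_image_sub_le_of_norm_fderiv_le (fun u _ => hdiff u) hbound hz hx

lemma eq_smul_gradient_sub_of_isMin_prox {d : E → ℝ} {a u w : E} {c : ℝ}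
    (hd : DifferentiableAt ℝ d w)
    (hmin : ∀ z, ⟪a, w - u⟫_ℝ + c * breg d u w ≤ ⟪a, z - u⟫_ℝ + c * breg d u z) :
    a = c • (gradient d u - gradient d w) := by
  set φ : E → ℝ := fun z => ⟪a, z - u⟫_ℝ + c * breg d u z
  have hφ : HasFDerivAt φ
      (innerSL ℝ a + c • (fderiv ℝ d w - innerSL ℝ (gradient d u))) w := by
    have hlin : ∀ b : E, HasFDerivAt (fun z => ⟪b, z - u⟫_ℝ) (innerSL ℝ b) w := fun b => by
      simpa [inner_sub_right] using ((innerSL ℝ b).hasFDerivAt (x := w)).sub_const ⟪b, u⟫_ℝ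
    exact (hlin a).add (((hd.hasFDerivAt.sub_const (d u)).sub (hlin _)).const_mul c)
  have hzero := IsLocalMin.hasFDerivAt_eq_zero (Eventually.of_forall hmin) hφ
  have horth : ∀ v, ⟪a + c • (gradient d w - gradient d u), v⟫_ℝ = 0 := fun v => by
    have := congrArg (· v) hzero
    simpa [inner_add_left, inner_sub_left, real_inner_smul_left, gradient,
      InnerProductSpace.toDual_symm_apply] using this
  have := inner_self_eq_zero.mp (horth _)
  rw [smul_sub]
  linear_combination (norm := module) this

lemma BregUniformlyConvex.exists_isMin_prox [FiniteDimensional ℝ E] {d : E → ℝ} {q σ : ℝ}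
    (h : BregUniformlyConvex d q σ) (hq : 2 ≤ q) (hσ : 0 < σ) (hdc : Continuous d)
    (a u : E) {c : ℝ} (hc : 0 < c) :
    ∃ w, ∀ z, ⟪a, w - u⟫_ℝ + c * breg d u w ≤ ⟪a, z - u⟫_ℝ + c * breg d u z := by
  have hlower : ∀ z, c * (σ / q) * ‖z - u‖ ^ q - ‖a‖ * ‖z - u‖
      ≤ ⟪a, z - u⟫_ℝ + c * breg d u z := fun z => by
    have := mul_le_mul_of_nonneg_left (h z u) hc.le
    linarith [neg_le_of_abs_le (abs_real_inner_le_norm a (z - u))]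
  have hnorm : Tendsto (fun z : E => ‖z - u‖) (cocompact E) atTop :=
    tendsto_norm_cocompact_atTop.comp (Homeomorph.subRight u).map_cocompact.le
  have hcoer := tendsto_atTop_mono hlower
    ((tendsto_mul_rpow_sub_mul_atTop (by positivity) hq).comp hnorm)
  have hcont : Continuous fun z => ⟪a, z - u⟫_ℝ + c * breg d u z := by
    unfold breg; fun_prop
  exact hcont.exists_forall_le hcoer

namespace stepOK

variable {g d : E → ℝ} {c : ℝ} {u w : E}

lemma le (h : stepOK g d c u w) : g w ≤ g u := by
  have := h.1 u
  simp only [sub_self, inner_zero_right, breg_self, mul_zero, add_zero] at this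
  linarith [h.2]

lemma three_point (h : stepOK g d c u w) (hd : DifferentiableAt ℝ d w) (x : E) :
    g w ≤ g u + ⟪gradient g u, x - u⟫_ℝ + c * breg d u x - c * breg d w x := by
  have hsplit : ⟪gradient g u, w - u⟫_ℝ
      = ⟪gradient g u, x - u⟫_ℝ + c * (breg d u x - breg d u w - breg d w x) := by
    have hx : ⟪c • (gradient d w - gradient d u), x - w⟫_ℝ = ⟪gradient g u, w - x⟫_ℝ := by
      rw [← inner_neg_neg, ← smul_neg, neg_sub, neg_sub,
        ← eq_smul_gradient_sub_of_isMin_prox hd h.1]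
    rw [breg_three_point, ← real_inner_smul_left, hx, ← inner_add_right]
    congr 1
    abel
  linarith [h.2]

lemma mul_breg_add_sub_le (h : stepOK g d c u w) (hd : DifferentiableAt ℝ d w) {μ M : ℝ}
    (hH4 : RelativelyStronglyConvex g d μ) (hβ : ∀ u v, 0 ≤ breg d u v) (hμ : 0 ≤ μ)
    (hc : 0 < c) (hcM : c ≤ M) {x : E} (hx : ∀ z, g x ≤ g z) :
    M * breg d w x + (g w - g x) ≤ (M - μ) * breg d u x := by
  have hstep : c * breg d w x + (g w - g x) ≤ (c - μ) * breg d u x := by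
    linarith [h.three_point hd x, hH4 x u]
  have hmono : breg d w x ≤ breg d u x := by
    refine le_of_mul_le_mul_left ?_ hc
    nlinarith [hβ u x, hx w]
  nlinarith [mul_le_mul_of_nonneg_left hmono (sub_nonneg.2 hcM)]

lemma norm_gradient_rpow_le (h : stepOK g d c u w) (hd : ContDiff ℝ 2 d) {q σ : ℝ}
    (hH2 : BregUniformlyConvex d q σ) (hq : 1 ≤ q) (hσ : 0 < σ) {M : ℝ} (hc : 0 < c)
    (hcM : c ≤ M) {s : Set E} (hs : Convex ℝ s) {N : ℝ}
    (hN : ∀ z ∈ s, ‖iteratedFDeriv ℝ 2 d z‖ ≤ N) (hu : u ∈ s) (hw : w ∈ s) :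
    ‖gradient g u‖ ^ q ≤ q * M ^ (q - 1) * N ^ q * (g u - g w) / σ := by
  have hdw : DifferentiableAt ℝ d w := hd.differentiable two_ne_zero w
  have hN0 : 0 ≤ N := (norm_nonneg _).trans (hN u hu)
  have hdesc : c * (σ / q * ‖u - w‖ ^ q) ≤ g u - g w := by
    have := h.three_point hdw u
    simp only [sub_self, inner_zero_right, breg_self, mul_zero, add_zero] at this
    nlinarith [hH2 u w]
  have hgrad : ‖gradient g u‖ ≤ c * (N * ‖u - w‖) := by
    rw [eq_smul_gradient_sub_of_isMin_prox hdw h.1, norm_smul, Real.norm_of_nonneg hc.le]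
    gcongr
    exact norm_gradient_sub_le hd hs hN hu hw
  have hcq : c ^ q = c ^ (q - 1) * c := by
    rw [← Real.rpow_add_one hc.ne', sub_add_cancel]
  calc ‖gradient g u‖ ^ q ≤ (c * (N * ‖u - w‖)) ^ q := by gcongr
    _ = c ^ (q - 1) * N ^ q * (q / σ) * (c * (σ / q * ‖u - w‖ ^ q)) := by
      rw [Real.mul_rpow hc.le (by positivity), Real.mul_rpow hN0 (norm_nonneg _), hcq]
      field_simp
    _ ≤ M ^ (q - 1) * N ^ q * (q / σ) * (g u - g w) := by
      have : 0 ≤ M := hc.le.trans hcM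
      gcongr
    _ = q * M ^ (q - 1) * N ^ q * (g u - g w) / σ := by ring

end stepOK

lemma RelativelySmooth.exists_stepOK [FiniteDimensional ℝ E] {g d : E → ℝ} {L q σ c : ℝ}
    (hH1 : RelativelySmooth g d L) (hH2 : BregUniformlyConvex d q σ) (hq : 2 ≤ q)
    (hσ : 0 < σ) (hdc : Continuous d) (hL : 0 < L) (hLc : L ≤ c) (u : E) :
    ∃ w, stepOK g d c u w := by
  obtain ⟨w, hw⟩ := hH2.exists_isMin_prox hq hσ hdc (gradient g u) u (hL.trans_le hLc)
  refine ⟨w, hw, ?_⟩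
  nlinarith [hH1 w u, hH2.breg_nonneg (by linarith) hσ.le u w]

end Bregman

lemma mul_pow_sub_one_le_of_contraction {β Δ : ℕ → ℝ} {M μ : ℝ} (hμ : 0 < μ) (hμM : μ < M)
    (hβ : ∀ k, 0 ≤ β k) (hΔ : Antitone Δ)
    (hrec : ∀ k, M * β (k + 1) + Δ (k + 1) ≤ (M - μ) * β k) (T : ℕ) :
    Δ T * ((1 + μ / (M - μ)) ^ T - 1) ≤ μ * β 0 := by
  set r := 1 + μ / (M - μ)
  have hr : (M - μ) * r = M := by
    have : M - μ ≠ 0 := by linarith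
    simp only [r]
    field_simp
    ring
  have hr1 : 0 ≤ r - 1 := by
    have : 0 < μ / (M - μ) := div_pos hμ (by linarith)
    simp only [r]
    linarith
  have hr0 : 0 ≤ r := by linarith
  -- `r ^ n` is the weight that turns the contraction into a telescoping sum
  have hweighted : ∀ n ≤ T, μ * r ^ n * β n + Δ T * (r ^ n - 1) ≤ μ * β 0 := by
    intro n
    induction n with
    | zero => simp
    | succ n ih =>
      intro hn
      have key : M * β (n + 1) + Δ T ≤ (M - μ) * β n := by
        linarith [hrec n, hΔ hn]
      have := mul_le_mul_of_nonneg_left key (mul_nonneg (pow_nonneg hr0 n) hr1)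
      linear_combination ih (by omega) + this + r ^ n * (β n - β (n + 1)) * hr
  have := mul_nonneg (mul_nonneg hμ.le (pow_nonneg hr0 T)) (hβ T)
  linarith [hweighted T le_rfl]

lemma two_le_pow_of_inv_logb_le {r : ℝ} (hr : 1 < r) {T : ℕ} (hT : (Real.logb 2 r)⁻¹ ≤ T) :
    2 ≤ r ^ T := by
  have hlog : 0 < Real.logb 2 r := Real.logb_pos one_lt_two hr
  have : 1 ≤ Real.logb 2 (r ^ T) := by
    rwa [Real.logb_pow, ← inv_le_iff_one_le_mul₀ hlog]
  simpa using (Real.le_logb_iff_rpow_le one_lt_two (by positivity)).1 this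

lemma le_rpow_one_div_mul_rpow_neg_div {a K r q : ℝ} (ha : 0 ≤ a) (hK : 0 ≤ K) (hr : 0 < r)
    (hq : 0 < q) {T : ℕ} (h : a ^ q ≤ K / r ^ T) : a ≤ K ^ (1 / q) * r ^ (-(T : ℝ) / q) := by
  have hsplit : K ^ (1 / q) * r ^ (-(T : ℝ) / q) = (K / r ^ T) ^ (1 / q) := by
    rw [div_eq_mul_inv K, Real.mul_rpow hK (by positivity), ← Real.rpow_natCast,
      ← Real.rpow_neg hr.le, ← Real.rpow_mul hr.le]
    ring_nf
  rwa [hsplit, one_div, Real.le_rpow_inv_iff_of_pos ha (by positivity) hq]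

namespace algA

variable {E : Type*} [NormedAddCommGroup E] [InnerProductSpace ℝ E] [CompleteSpace E]
  {g d : E → ℝ} {L0 : ℝ} {y : ℕ → E} {Lk : ℕ → ℝ} {ik : ℕ → ℕ}

lemma step (h : algA g d L0 y Lk ik) (k : ℕ) :
    stepOK g d (2 ^ ik k * Lk k) (y k) (y (k + 1)) :=
  (h.2 k).1

lemma coeff_pos (h : algA g d L0 y Lk ik) (hL0 : 0 < L0) (k : ℕ) : 0 < 2 ^ ik k * Lk k := by
  have : 0 < Lk k := by
    induction k with
    | zero => exact h.1 ▸ hL0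
    | succ k ih => rw [(h.2 k).2.2]; positivity
  positivity

lemma coeff_le [FiniteDimensional ℝ E] (h : algA g d L0 y Lk ik) {L q σ : ℝ}
    (hH1 : RelativelySmooth g d L) (hH2 : BregUniformlyConvex d q σ) (hq : 2 ≤ q) (hσ : 0 < σ)
    (hdc : Continuous d) (hL : 0 < L) (k : ℕ) : 2 ^ ik k * Lk k ≤ max L0 (2 * L) := by
  -- a coefficient `≥ L` is always accepted, so the last rejected one lies below `L`
  have hacc : ∀ k, 2 ^ ik k * Lk k ≤ max (Lk k) (2 * L) := fun k => by
    cases hik : ik k with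
    | zero => simp
    | succ j =>
      have hrej : 2 ^ j * Lk k < L := by
        by_contra! hge
        exact (h.2 k).2.1 j (by omega) (hH1.exists_stepOK hH2 hq hσ hdc hL hge (y k))
      rw [pow_succ]
      exact le_max_of_le_right (by linarith)
  have hLk : ∀ k, Lk k ≤ max L0 (2 * L) := fun k => by
    induction k with
    | zero => exact h.1 ▸ le_max_left _ _
    | succ k ih =>
      rw [(h.2 k).2.2]
      have hmax : 0 ≤ max L0 (2 * L) := le_max_of_le_right (by linarith)
      linarith [(hacc k).trans (max_le ih (le_max_right _ _))]
  exact (hacc k).trans (max_le (hLk k) (le_max_right _ _))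

lemma antitone (h : algA g d L0 y Lk ik) : Antitone fun k => g (y k) :=
  antitone_nat_of_succ_le fun k => (h.step k).le

end algA

theorem statement_16_general
    {E : Type*} [NormedAddCommGroup E] [InnerProductSpace ℝ E] [FiniteDimensional ℝ E]
    (d : E → ℝ)
    (g : E → ℝ)
    (L : ℝ) (hL : 0 < L)
    (hH1 : ∀ x y : E, g x ≤ g y + ⟪gradient g y, x - y⟫_ℝ + L * breg d y x)
    (q σq : ℝ) (hq : 2 ≤ q) (hσq : 0 < σq)
    (hd2 : ContDiff ℝ 2 d)
    (hH2 : ∀ x y : E, σq / q * ‖x - y‖ ^ q ≤ breg d y x)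
    (μ : ℝ) (hμ : 0 < μ)
    (hH4 : ∀ x y : E, g y + ⟪gradient g y, x - y⟫_ℝ + μ * breg d y x ≤ g x)
    (L0 : ℝ) (hL0 : 0 < L0)
    (hμM : μ < max (2 * L0) (4 * L))
    (y : ℕ → E) (Lk : ℕ → ℝ) (ik : ℕ → ℕ)
    (halg : algA g d L0 y Lk ik)
    (N : ℝ)
    (hH3 : ∀ z ∈ convexHull ℝ {w : E | g w ≤ g (y 0)}, ‖iteratedFDeriv ℝ 2 d z‖ ≤ N)
    (ystar : E) (hmin : ∀ z : E, g ystar ≤ g z)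
    (T : ℕ)
    (hT : (Real.logb 2 (1 + μ / (max (2 * L0) (4 * L) - μ)))⁻¹ ≤ (T : ℝ)) :
    ‖gradient g (y T)‖ ≤
      (2 * q * max (2 * L0) (4 * L) ^ (q - 1) * N ^ q * μ * breg d (y 0) ystar / σq) ^ (1 / q)
        * (1 + μ / (max (2 * L0) (4 * L) - μ)) ^ (-(T : ℝ) / q) := by
  set M := max (2 * L0) (4 * L)
  set r := 1 + μ / (M - μ)
  have hdd : Differentiable ℝ d := hd2.differentiable two_ne_zero
  have hβ : ∀ u v, 0 ≤ breg d u v := BregUniformlyConvex.breg_nonneg hH2 (by linarith) hσq.le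
  have hcM : ∀ k, 2 ^ ik k * Lk k ≤ M := fun k =>
    (halg.coeff_le hH1 hH2 hq hσq hdd.continuous hL k).trans
      (max_le_max (by linarith) (by linarith))
  have hsub : ∀ k, y k ∈ convexHull ℝ {w | g w ≤ g (y 0)} := fun k =>
    subset_convexHull ℝ _ (halg.antitone (Nat.zero_le k))
  have hN0 : 0 ≤ N := (norm_nonneg _).trans (hH3 _ (hsub 0))
  have hrate := mul_pow_sub_one_le_of_contraction hμ hμM (fun k => hβ _ _)
    (fun i j hij => sub_le_sub_right (halg.antitone hij) (g ystar))
    (fun k => (halg.step k).mul_breg_add_sub_le (hdd _) hH4 hβ hμ.le (halg.coeff_pos hL0 k)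
      (hcM k) hmin) T
  have hr1 : 1 < r := by
    have := div_pos hμ (sub_pos.2 hμM)
    simp only [r]
    linarith
  have hr : 2 ≤ r ^ T := two_le_pow_of_inv_logb_le hr1 hT
  have hgap : g (y T) - g ystar ≤ 2 * μ * breg d (y 0) ystar / r ^ T := by
    rw [le_div_iff₀ (by positivity)]
    nlinarith [hmin (y T)]
  have hgrad := (halg.step T).norm_gradient_rpow_le hd2 hH2 (by linarith) hσq
    (halg.coeff_pos hL0 T) (hcM T) (convex_convexHull ℝ _) hH3 (hsub T) (hsub (T + 1))
  have hβ0 := hβ (y 0) ystar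
  refine le_rpow_one_div_mul_rpow_neg_div (norm_nonneg _) (by positivity) (by positivity)
    (by positivity) (hgrad.trans ?_)
  calc q * M ^ (q - 1) * N ^ q * (g (y T) - g (y (T + 1))) / σq
      ≤ q * M ^ (q - 1) * N ^ q * (2 * μ * breg d (y 0) ystar / r ^ T) / σq := by
        gcongr
        linarith [hmin (y (T + 1))]
    _ = 2 * q * M ^ (q - 1) * N ^ q * μ * breg d (y 0) ystar / σq / r ^ T := by ring

/-- Corollary A.6. Under (H1)–(H3) and (H4) with `0 < μ < M := max{2L₀, 4L}`,
for every `T ≥ [log₂(1 + μ/(M − μ))]⁻¹`, Algorithm A satisfies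
`‖∇g(y_T)‖ ≤ [2q·M^{q−1}·N^q·μ·β_d(y₀, y*)/σ_q]^{1/q}·(1 + μ/(M − μ))^{−T/q}`. -/
theorem statement_16
    {E : Type*} [NormedAddCommGroup E] [InnerProductSpace ℝ E] [FiniteDimensional ℝ E]
    (d : E → ℝ) (hd : ConvexOn ℝ Set.univ d)
    (g : E → ℝ) (hg : Differentiable ℝ g)
    (L : ℝ) (hL : 0 < L)
    (hH1 : ∀ x y : E, g x ≤ g y + ⟪gradient g y, x - y⟫_ℝ + L * breg d y x)
    (q σq : ℝ) (hq : 2 ≤ q) (hσq : 0 < σq)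
    (hd2 : ContDiff ℝ 2 d)
    (hH2 : ∀ x y : E, σq / q * ‖x - y‖ ^ q ≤ breg d y x)
    (μ : ℝ) (hμ : 0 < μ)
    (hH4 : ∀ x y : E, g y + ⟪gradient g y, x - y⟫_ℝ + μ * breg d y x ≤ g x)
    (L0 : ℝ) (hL0 : 0 < L0)
    (hμM : μ < max (2 * L0) (4 * L))
    (y : ℕ → E) (Lk : ℕ → ℝ) (ik : ℕ → ℕ)
    (halg : algA g d L0 y Lk ik)
    (N : ℝ)
    (hH3 : ∀ z ∈ convexHull ℝ {w : E | g w ≤ g (y 0)}, ‖iteratedFDeriv ℝ 2 d z‖ ≤ N)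
    (ystar : E) (hmin : ∀ z : E, g ystar ≤ g z)
    (T : ℕ)
    (hT : (Real.logb 2 (1 + μ / (max (2 * L0) (4 * L) - μ)))⁻¹ ≤ (T : ℝ)) :
    ‖gradient g (y T)‖ ≤
      (2 * q * max (2 * L0) (4 * L) ^ (q - 1) * N ^ q * μ * breg d (y 0) ystar / σq) ^ (1 / q)
        * (1 + μ / (max (2 * L0) (4 * L) - μ)) ^ (-(T : ℝ) / q) :=
  statement_16_general d g L hL hH1 q σq hq hσq hd2 hH2 μ hμ hH4 L0 hL0 hμM y Lk ik halg N hH3 ystar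
    hmin T hT
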